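/- arXiv:1201.6273 — 5 statements merged into one kernel-verified Lean document; each statement's English description precedes it below -/
import Mathlib

section
/- Every finite-dimensional module over the Virasoro algebra (over the complex numbers) is trivial, i.e. all generators L_m and the central element C act as zero. -/
/-- Every finite-dimensional module over the Virasoro algebra (over ℂ) is trivial:
all generators `L m` and the central element `C` act as zero.  The Virasoro algebra
has basis `{L m : m ∈ ℤ} ∪ {C}` with `[L m, L n] = (m - n) L (m+n) + (C/12)(m³ - m) δ_{m+n,0}`
and `C` central. -/
theorem finite_dimensional_virasoro_module_trivial
    (M : Type*) [AddCommGroup M] [Module ℂ M] [FiniteDimensional ℂ M]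
    (L : ℤ → Module.End ℂ M) (C : Module.End ℂ M)
    (hC : ∀ m : ℤ, C * L m = L m * C)
    (hL : ∀ m n : ℤ,
      L m * L n - L n * L m
        = ((m : ℂ) - (n : ℂ)) • L (m + n)
          + (if m + n = 0 then (((m : ℂ) ^ 3 - (m : ℂ)) / 12) • C else 0)) :
    (∀ m : ℤ, L m = 0) ∧ C = 0 := by
  classical
  -- The adjoint action of `L 0` on `End ℂ M`.
  set D : Module.End ℂ (Module.End ℂ M) :=
    LinearMap.mulLeft ℂ (L 0) - LinearMap.mulRight ℂ (L 0) with hD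
  have hDL : ∀ m : ℤ, D (L m) = (-(m : ℂ)) • L m := by
    intro m
    have h := hL 0 m
    simp only [zero_add] at h
    have h2 : L 0 * L m - L m * L 0 = (-(m : ℂ)) • L m := by
      rcases eq_or_ne m 0 with rfl | hm
      · simpa using h
      · rw [h]
        simp [hm]
    simp only [hD, LinearMap.sub_apply, LinearMap.mulLeft_apply,
      LinearMap.mulRight_apply]
    exact h2
  -- Only finitely many `L m` are nonzero.
  have hinj : Function.Injective (fun m : ℤ => (-(m : ℂ))) := by
    intro a b h
    simpa using h
  have hS : Set.Finite {m : ℤ | L m ≠ 0} := by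
    have hsub : {m : ℤ | L m ≠ 0} ⊆
        (fun m : ℤ => (-(m : ℂ))) ⁻¹' {μ | D.HasEigenvalue μ} := by
      intro m hm
      exact Module.End.hasEigenvalue_of_hasEigenvector
        ⟨(Module.End.mem_eigenspace_iff).2 (hDL m), hm⟩
    exact (D.finite_hasEigenvalue.preimage (hinj.injOn)).subset hsub
  -- Kill all `L k` with `k ≠ 0`.
  have hkey : ∀ k : ℤ, k ≠ 0 → L k = 0 := by
    intro k hk
    have hT : Set.Finite ({m : ℤ | L m ≠ 0} ∪ (fun N : ℤ => k - N) ⁻¹' {m | L m ≠ 0}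
        ∪ {N : ℤ | 2 * N = k}) := by
      refine (hS.union (hS.preimage ?_)).union ?_
      · intro a _ b _ h
        simp only at h
        omega
      · refine Set.Finite.subset (Set.finite_singleton (k / 2)) ?_
        intro N hN
        simp only [Set.mem_setOf_eq] at hN
        simp only [Set.mem_singleton_iff]
        omega
    obtain ⟨N, hN⟩ := hT.infinite_compl.nonempty
    simp only [Set.mem_compl_iff, Set.mem_union, Set.mem_preimage, Set.mem_setOf_eq,
      not_or, not_not] at hN
    obtain ⟨⟨hN1, hN2⟩, hN3⟩ := hN
    have h := hL N (k - N)
    rw [hN1, hN2] at h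
    have hker : N + (k - N) = k := by ring
    rw [hker, if_neg hk] at h
    simp only [mul_zero, zero_mul, sub_zero, add_zero] at h
    push_cast at h
    have hc : ((N : ℂ) - ((k : ℂ) - (N : ℂ))) ≠ 0 := by
      have h2 : ((2 * N - k : ℤ) : ℂ) ≠ 0 :=
        Int.cast_ne_zero.2 (by omega)
      push_cast at h2
      intro hcon
      exact h2 (by linear_combination hcon)
    have h0 : ((N : ℂ) - ((k : ℂ) - (N : ℂ))) • L k = 0 := h.symm
    exact (smul_eq_zero.1 h0).resolve_left hc
  -- Now `L 0 = 0`.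
  have hL0 : L 0 = 0 := by
    have h := hL 1 (-1)
    rw [hkey 1 one_ne_zero, hkey (-1) (by norm_num)] at h
    norm_num at h
    have h2 : (2 : ℂ) • L 0 = 0 := h.symm
    simpa using (smul_eq_zero.1 h2).resolve_left (by norm_num)
  -- And `C = 0`.
  have hC0 : C = 0 := by
    have h := hL 2 (-2)
    rw [hkey 2 two_ne_zero, hkey (-2) (by norm_num)] at h
    norm_num [hL0] at h
    have h2 : ((1 : ℂ)/2) • C = 0 := h.symm
    exact (smul_eq_zero.1 h2).resolve_left (by norm_num)
  refine ⟨fun m => ?_, hC0⟩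
  rcases eq_or_ne m 0 with rfl | hm
  · exact hL0
  · exact hkey m hm
end

section
/- In a k-linear monoidal category, if S is an object with End(S) = k·id_S and a chosen isomorphism m : S ⊗ S → S, then the associator on S satisfies α_{S,S,S} = (m⁻¹ ⊗ id_S) ∘ (id_S ⊗ m). -/
open CategoryTheory MonoidalCategory

/-- In a `k`-linear monoidal category, if `S` is an object with `End S = k · id_S` and
`m : S ⊗ S ≅ S` is an isomorphism, then the associator (in the convention
`α_{S,S,S} : S ⊗ (S ⊗ S) → (S ⊗ S) ⊗ S`) satisfies
`α_{S,S,S} = (m⁻¹ ⊗ id_S) ∘ (id_S ⊗ m)`. -/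
theorem associator_of_idempotent_simple_object
    {k : Type*} [Field k] {M : Type*} [Category M] [Preadditive M]
    [CategoryTheory.Linear k M] [MonoidalCategory M] [MonoidalPreadditive M]
    [MonoidalLinear k M]
    (S : M) (hEnd : ∀ f : S ⟶ S, ∃ a : k, f = a • 𝟙 S)
    (m : S ⊗ S ≅ S) :
    (α_ S S S).inv = (S ◁ m.hom) ≫ (m.inv ▷ S) := by
  by_cases hS : (𝟙 S : S ⟶ S) = 0
  · -- degenerate case: `S` is a zero object
    have hm : m.hom = (0 : S ⊗ S ⟶ S) := by
      rw [← Category.comp_id m.hom, hS, Limits.comp_zero]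
    have h1 : (α_ S S S).inv = 0 := by
      rw [show (α_ S S S).inv = (α_ S S S).inv ≫ (m.hom ≫ m.inv) ▷ S by simp, hm]
      simp
    rw [h1, hm]
    simp
  · -- main case
    obtain ⟨a, ha⟩ := hEnd (m.inv ≫ (S ◁ m.inv) ≫ (α_ S S S).inv ≫ (m.hom ▷ S) ≫ m.hom)
    -- the key "associativity up to scalar" identity
    have star : (α_ S S S).inv ≫ m.hom ▷ S ≫ m.hom = a • (S ◁ m.hom ≫ m.hom) := by
      calc (α_ S S S).inv ≫ m.hom ▷ S ≫ m.hom
          = (S ◁ m.hom) ≫ m.hom ≫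
            (m.inv ≫ (S ◁ m.inv) ≫ (α_ S S S).inv ≫ (m.hom ▷ S) ≫ m.hom) := by
            simp
        _ = (S ◁ m.hom) ≫ m.hom ≫ ((a : k) • 𝟙 S) := by rw [← ha]
        _ = a • (S ◁ m.hom ≫ m.hom) := by simp
    have key : (α_ S S S).inv = a • ((S ◁ m.hom) ≫ (m.inv ▷ S)) := by
      calc (α_ S S S).inv
          = (α_ S S S).inv ≫ m.hom ▷ S ≫ m.hom ≫ m.inv ≫ m.inv ▷ S := by simp
        _ = ((α_ S S S).inv ≫ m.hom ▷ S ≫ m.hom) ≫ m.inv ≫ m.inv ▷ S := by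
            simp only [Category.assoc]
        _ = (a • (S ◁ m.hom ≫ m.hom)) ≫ m.inv ≫ m.inv ▷ S := by rw [star]
        _ = a • ((S ◁ m.hom) ≫ (m.inv ▷ S)) := by simp
    -- pentagon computation, right-hand route: two associators, scalar a²
    have E1 : (α_ S S (S ⊗ S)).inv ≫ (α_ (S ⊗ S) S S).inv ≫
          (m.hom ▷ S) ▷ S ≫ m.hom ▷ S ≫ m.hom =
        (a * a) • (S ◁ (S ◁ m.hom) ≫ S ◁ m.hom ≫ m.hom) := by
      calc (α_ S S (S ⊗ S)).inv ≫ (α_ (S ⊗ S) S S).inv ≫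
            (m.hom ▷ S) ▷ S ≫ m.hom ▷ S ≫ m.hom
          = (α_ S S (S ⊗ S)).inv ≫ m.hom ▷ (S ⊗ S) ≫
              (α_ S S S).inv ≫ m.hom ▷ S ≫ m.hom := by
            rw [← associator_inv_naturality_left_assoc]
        _ = (α_ S S (S ⊗ S)).inv ≫ m.hom ▷ (S ⊗ S) ≫ (a • (S ◁ m.hom ≫ m.hom)) := by
            rw [star]
        _ = a • ((α_ S S (S ⊗ S)).inv ≫ m.hom ▷ (S ⊗ S) ≫ S ◁ m.hom ≫ m.hom) := by
            simp only [Linear.comp_smul]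
        _ = a • ((α_ S S (S ⊗ S)).inv ≫ (S ⊗ S) ◁ m.hom ≫ m.hom ▷ S ≫ m.hom) := by
            rw [← whisker_exchange_assoc]
        _ = a • (S ◁ (S ◁ m.hom) ≫ (α_ S S S).inv ≫ m.hom ▷ S ≫ m.hom) := by
            rw [← associator_inv_naturality_right_assoc]
        _ = a • (S ◁ (S ◁ m.hom) ≫ (a • (S ◁ m.hom ≫ m.hom))) := by rw [star]
        _ = (a * a) • (S ◁ (S ◁ m.hom) ≫ S ◁ m.hom ≫ m.hom) := by
            simp only [Linear.comp_smul, smul_smul, Category.assoc]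
    -- pentagon computation, left-hand route: three associators, scalar a³
    have E2 : S ◁ (α_ S S S).inv ≫ (α_ S (S ⊗ S) S).inv ≫ (α_ S S S).inv ▷ S ≫
          (m.hom ▷ S) ▷ S ≫ m.hom ▷ S ≫ m.hom =
        (a * (a * a)) • (S ◁ (S ◁ m.hom) ≫ S ◁ m.hom ≫ m.hom) := by
      calc S ◁ (α_ S S S).inv ≫ (α_ S (S ⊗ S) S).inv ≫ (α_ S S S).inv ▷ S ≫
            (m.hom ▷ S) ▷ S ≫ m.hom ▷ S ≫ m.hom
          = S ◁ (α_ S S S).inv ≫ (α_ S (S ⊗ S) S).inv ≫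
              ((α_ S S S).inv ≫ m.hom ▷ S ≫ m.hom) ▷ S ≫ m.hom := by
            simp only [comp_whiskerRight, Category.assoc]
        _ = S ◁ (α_ S S S).inv ≫ (α_ S (S ⊗ S) S).inv ≫
              (a • (S ◁ m.hom ≫ m.hom)) ▷ S ≫ m.hom := by rw [star]
        _ = a • (S ◁ (α_ S S S).inv ≫ (α_ S (S ⊗ S) S).inv ≫
              (S ◁ m.hom) ▷ S ≫ m.hom ▷ S ≫ m.hom) := by
            simp only [MonoidalLinear.smul_whiskerRight, comp_whiskerRight,
              Linear.comp_smul, Linear.smul_comp, Category.assoc]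
        _ = a • (S ◁ (α_ S S S).inv ≫ S ◁ (m.hom ▷ S) ≫
              (α_ S S S).inv ≫ m.hom ▷ S ≫ m.hom) := by
            rw [← associator_inv_naturality_middle_assoc]
        _ = a • (S ◁ (α_ S S S).inv ≫ S ◁ (m.hom ▷ S) ≫ (a • (S ◁ m.hom ≫ m.hom))) := by
            rw [star]
        _ = (a * a) • (S ◁ (α_ S S S).inv ≫ S ◁ (m.hom ▷ S) ≫ S ◁ m.hom ≫ m.hom) := by
            simp only [Linear.comp_smul, smul_smul, Category.assoc]
        _ = (a * a) • (S ◁ ((α_ S S S).inv ≫ m.hom ▷ S ≫ m.hom) ≫ m.hom) := by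
            simp only [MonoidalCategory.whiskerLeft_comp, Category.assoc]
        _ = (a * a) • (S ◁ (a • (S ◁ m.hom ≫ m.hom)) ≫ m.hom) := by rw [star]
        _ = (a * (a * a)) • (S ◁ (S ◁ m.hom) ≫ S ◁ m.hom ≫ m.hom) := by
            simp only [MonoidalLinear.whiskerLeft_smul, MonoidalCategory.whiskerLeft_comp,
              Linear.smul_comp, smul_smul, Category.assoc]
            ring_nf
    -- the pentagon identity forces a³ • T = a² • T
    have hP : (a * (a * a)) • (S ◁ (S ◁ m.hom) ≫ S ◁ m.hom ≫ m.hom) =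
        (a * a) • (S ◁ (S ◁ m.hom) ≫ S ◁ m.hom ≫ m.hom) := by
      rw [← E1, ← E2, pentagon_inv_assoc]
    -- cancel the isomorphism T
    have h3 : (a * (a * a)) • (𝟙 S) = (a * a) • (𝟙 S) := by
      have hT : (m.inv ≫ S ◁ m.inv ≫ S ◁ (S ◁ m.inv)) ≫
          (S ◁ (S ◁ m.hom) ≫ S ◁ m.hom ≫ m.hom) = 𝟙 S := by
        simp only [Category.assoc, ← MonoidalCategory.whiskerLeft_comp_assoc,
          ← MonoidalCategory.whiskerLeft_comp]
        simp
      have h := congrArg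
        (fun f => (m.inv ≫ S ◁ m.inv ≫ S ◁ (S ◁ m.inv)) ≫ f) hP
      simp only [Linear.comp_smul] at h
      rwa [hT] at h
    have ha0 : a ≠ 0 := by
      intro h0
      have hz : (α_ S S S).inv = 0 := by rw [key, h0, zero_smul]
      apply hS
      calc (𝟙 S : S ⟶ S)
          = m.inv ≫ (S ◁ m.inv) ≫ (α_ S S S).inv ≫ (α_ S S S).hom ≫
              (S ◁ m.hom) ≫ m.hom := by simp
        _ = 0 := by rw [hz]; simp
    have ha1 : a = 1 := by
      by_contra hne
      have hc : a * a * (a - 1) ≠ 0 :=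
        mul_ne_zero (mul_ne_zero ha0 ha0) (sub_ne_zero.mpr hne)
      have hz : (a * a * (a - 1)) • (𝟙 S : S ⟶ S) = 0 := by
        have : (a * (a * a) - a * a) • (𝟙 S : S ⟶ S) = 0 := by
          rw [sub_smul, h3, sub_self]
        rw [show a * a * (a - 1) = a * (a * a) - a * a by ring]
        exact this
      apply hS
      calc (𝟙 S : S ⟶ S) = (a * a * (a - 1))⁻¹ • ((a * a * (a - 1)) • (𝟙 S : S ⟶ S)) := by
            rw [smul_smul, inv_mul_cancel₀ hc, one_smul]
        _ = 0 := by rw [hz, smul_zero]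
    rw [key, ha1, one_smul]
end

section
/- Let 𝓜 be a k-linear monoidal category and S ∈ 𝓜 with End(S) = k·id_S and an isomorphism m : S ⊗ S → S. Then (S, m) is an associative algebra (not necessarily unital) in 𝓜, and if 𝓜 is braided this algebra is commutative. -/
open CategoryTheory MonoidalCategory

section Aux

variable {k : Type*} [Field k] {M : Type*} [Category M] [Preadditive M]
  [CategoryTheory.Linear k M]

/-- Cancel an isomorphism in a scalar equation. -/
lemma aux_smul_cancel_of_isIso {X Y : M} (f : X ⟶ Y) [IsIso f] {c d : k}
    (h : c • f = d • f) : c • (𝟙 Y) = d • (𝟙 Y) := by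
  have h2 := congrArg (fun g => inv f ≫ g) h
  simpa [Linear.comp_smul] using h2

/-- An isomorphism equal to a scalar multiple of the identity has a nonzero scalar,
unless the identity vanishes. -/
lemma aux_scalar_ne_zero {Y : M} (f : Y ⟶ Y) [IsIso f] {c : k}
    (h : f = c • 𝟙 Y) (hY : 𝟙 Y ≠ (0 : Y ⟶ Y)) : c ≠ 0 := by
  intro hc
  apply hY
  have : f = 0 := by rw [h, hc, zero_smul]
  calc 𝟙 Y = inv f ≫ f := by simp
    _ = 0 := by simp [this]

/-- If `c • 𝟙 Y = d • 𝟙 Y` and the identity is nonzero, then `c = d`. -/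
lemma aux_scalar_eq {Y : M} {c d : k} (h : c • (𝟙 Y) = d • (𝟙 Y))
    (hY : 𝟙 Y ≠ (0 : Y ⟶ Y)) : c = d := by
  by_contra hcd
  apply hY
  have h0 : (c - d) • (𝟙 Y) = 0 := by rw [sub_smul, h, sub_self]
  have : 𝟙 Y = (c - d)⁻¹ • ((c - d) • 𝟙 Y) := by
    rw [smul_smul, inv_mul_cancel₀ (sub_ne_zero.mpr hcd), one_smul]
  rw [this, h0, smul_zero]

end Aux

/-- Let `𝓜` be a `k`-linear (braided) monoidal category and `S ∈ 𝓜` with `End S = k · id_S`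
and an isomorphism `m : S ⊗ S ≅ S`.  Then `(S, m)` is an associative (not necessarily unital)
algebra in `𝓜`: `μ ∘ (id ⊗ μ) = μ ∘ (μ ⊗ id) ∘ α_{S,S,S}`, and this algebra is
commutative: `μ ∘ c_{S,S} = μ`. -/
theorem idempotent_simple_object_is_commutative_algebra
    {k : Type*} [Field k] {M : Type*} [Category M] [Preadditive M]
    [CategoryTheory.Linear k M] [MonoidalCategory M] [MonoidalPreadditive M]
    [MonoidalLinear k M] [BraidedCategory M]
    (S : M) (hEnd : ∀ f : S ⟶ S, ∃ a : k, f = a • 𝟙 S)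
    (m : S ⊗ S ≅ S) :
    ((S ◁ m.hom) ≫ m.hom = (α_ S S S).inv ≫ (m.hom ▷ S) ≫ m.hom)
      ∧ ((β_ S S).hom ≫ m.hom = m.hom) := by
  by_cases hS : 𝟙 S = (0 : S ⟶ S)
  · have hμ0 : m.hom = 0 := by rw [← Category.comp_id m.hom, hS, Limits.comp_zero]
    constructor <;> simp [hμ0]
  -- The scalar `a` measuring the failure of associativity
  obtain ⟨a, ha⟩ := hEnd (m.inv ≫ (m.inv ▷ S) ≫ (α_ S S S).hom ≫ (S ◁ m.hom) ≫ m.hom)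
  have hL : (α_ S S S).hom ≫ (S ◁ m.hom) ≫ m.hom = a • ((m.hom ▷ S) ≫ m.hom) := by
    have h := congrArg (fun f => (m.hom ▷ S) ≫ m.hom ≫ f) ha
    simpa [Linear.comp_smul] using h
  have hL' : (α_ S S S).hom ≫ (S ◁ m.hom) = a • (m.hom ▷ S) := by
    have h := congrArg (fun f => f ≫ m.inv) hL
    simpa [Linear.smul_comp] using h
  -- the pentagon forces `a² = a³`
  have hR2 : (α_ (S ⊗ S) S S).hom ≫ (α_ S S (S ⊗ S)).hom ≫
      (S ◁ (S ◁ m.hom)) ≫ (S ◁ m.hom) ≫ m.hom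
      = (a * a) • (((m.hom ▷ S) ▷ S) ≫ (m.hom ▷ S) ≫ m.hom) := by
    calc (α_ (S ⊗ S) S S).hom ≫ (α_ S S (S ⊗ S)).hom ≫
          (S ◁ (S ◁ m.hom)) ≫ (S ◁ m.hom) ≫ m.hom
        = (α_ (S ⊗ S) S S).hom ≫ ((S ⊗ S) ◁ m.hom) ≫
            ((α_ S S S).hom ≫ (S ◁ m.hom) ≫ m.hom) := by
          rw [associator_naturality_right_assoc]
      _ = a • ((α_ (S ⊗ S) S S).hom ≫ ((S ⊗ S) ◁ m.hom) ≫ (m.hom ▷ S) ≫ m.hom) := by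
          rw [hL]; simp [Linear.comp_smul]
      _ = a • ((α_ (S ⊗ S) S S).hom ≫ (m.hom ▷ (S ⊗ S)) ≫ (S ◁ m.hom) ≫ m.hom) := by
          rw [whisker_exchange_assoc]
      _ = a • (((m.hom ▷ S) ▷ S) ≫ ((α_ S S S).hom ≫ (S ◁ m.hom) ≫ m.hom)) := by
          rw [associator_naturality_left_assoc]
      _ = (a * a) • (((m.hom ▷ S) ▷ S) ≫ (m.hom ▷ S) ≫ m.hom) := by
          rw [hL]; simp [Linear.comp_smul, smul_smul]
  have hL3 : ((α_ S S S).hom ▷ S) ≫ (α_ S (S ⊗ S) S).hom ≫ (S ◁ (α_ S S S).hom) ≫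
      (S ◁ (S ◁ m.hom)) ≫ (S ◁ m.hom) ≫ m.hom
      = (a * (a * a)) • (((m.hom ▷ S) ▷ S) ≫ (m.hom ▷ S) ≫ m.hom) := by
    calc ((α_ S S S).hom ▷ S) ≫ (α_ S (S ⊗ S) S).hom ≫ (S ◁ (α_ S S S).hom) ≫
          (S ◁ (S ◁ m.hom)) ≫ (S ◁ m.hom) ≫ m.hom
        = ((α_ S S S).hom ▷ S) ≫ (α_ S (S ⊗ S) S).hom ≫
            (S ◁ ((α_ S S S).hom ≫ (S ◁ m.hom))) ≫ (S ◁ m.hom) ≫ m.hom := by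
          rw [MonoidalCategory.whiskerLeft_comp]; simp only [Category.assoc]
      _ = a • (((α_ S S S).hom ▷ S) ≫ (α_ S (S ⊗ S) S).hom ≫
            (S ◁ (m.hom ▷ S)) ≫ (S ◁ m.hom) ≫ m.hom) := by
          rw [hL']; simp [Linear.comp_smul, Linear.smul_comp]
      _ = a • (((α_ S S S).hom ▷ S) ≫ ((S ◁ m.hom) ▷ S) ≫
            ((α_ S S S).hom ≫ (S ◁ m.hom) ≫ m.hom)) := by
          rw [associator_naturality_middle_assoc]
      _ = (a * a) • (((α_ S S S).hom ▷ S) ≫ ((S ◁ m.hom) ▷ S) ≫ (m.hom ▷ S) ≫ m.hom) := by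
          rw [hL]; simp [Linear.comp_smul, smul_smul]
      _ = (a * a) • ((((α_ S S S).hom ≫ (S ◁ m.hom)) ▷ S) ≫ (m.hom ▷ S) ≫ m.hom) := by
          rw [comp_whiskerRight]; simp only [Category.assoc]
      _ = (a * (a * a)) • (((m.hom ▷ S) ▷ S) ≫ (m.hom ▷ S) ≫ m.hom) := by
          rw [hL']; simp [Linear.smul_comp, smul_smul]; ring_nf
  have key : (a * a) • (((m.hom ▷ S) ▷ S) ≫ (m.hom ▷ S) ≫ m.hom)
      = (a * (a * a)) • (((m.hom ▷ S) ▷ S) ≫ (m.hom ▷ S) ≫ m.hom) := by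
    rw [← hR2, ← hL3, ← MonoidalCategory.pentagon_assoc]
  have hkey2 : (a * a) • (𝟙 S) = (a * (a * a)) • (𝟙 S) :=
    aux_smul_cancel_of_isIso (((m.hom ▷ S) ▷ S) ≫ (m.hom ▷ S) ≫ m.hom) key
  have haa : a * a = a * (a * a) := aux_scalar_eq hkey2 hS
  have ha0 : a ≠ 0 := by
    refine aux_scalar_ne_zero (m.inv ≫ (m.inv ▷ S) ≫ (α_ S S S).hom ≫ (S ◁ m.hom) ≫ m.hom)
      ha hS
  have ha1 : a = 1 := by
    have h1 : a = a * a := mul_left_cancel₀ ha0 haa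
    have h2 : a * 1 = a * a := by rw [mul_one]; exact h1
    exact (mul_left_cancel₀ ha0 h2).symm
  rw [ha1, one_smul] at hL hL'
  have hassoc : (S ◁ m.hom) ≫ m.hom = (α_ S S S).inv ≫ (m.hom ▷ S) ≫ m.hom := by
    rw [← hL, Iso.inv_hom_id_assoc]
  refine ⟨hassoc, ?_⟩
  -- commutativity
  obtain ⟨b, hb⟩ := hEnd (m.inv ≫ (β_ S S).hom ≫ m.hom)
  have hB : (β_ S S).hom ≫ m.hom = b • m.hom := by
    have h := congrArg (fun f => m.hom ≫ f) hb
    simpa [Linear.comp_smul] using h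
  have hnat : (β_ (S ⊗ S) S).hom ≫ (S ◁ m.hom) ≫ m.hom = b • ((m.hom ▷ S) ≫ m.hom) := by
    rw [← BraidedCategory.braiding_naturality_left_assoc, hB, Linear.comp_smul]
  have hAinv : (α_ S S S).inv ≫ (m.hom ▷ S) ≫ m.hom = (S ◁ m.hom) ≫ m.hom := hassoc.symm
  have hbeta : (β_ (S ⊗ S) S).hom = (α_ S S S).hom ≫ (S ◁ (β_ S S).hom) ≫
      (α_ S S S).inv ≫ ((β_ S S).hom ▷ S) ≫ (α_ S S S).hom := by
    have h := BraidedCategory.hexagon_reverse S S S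
    calc (β_ (S ⊗ S) S).hom
        = (α_ S S S).hom ≫ ((α_ S S S).inv ≫ (β_ (S ⊗ S) S).hom ≫ (α_ S S S).inv) ≫
            (α_ S S S).hom := by simp
      _ = (α_ S S S).hom ≫ ((S ◁ (β_ S S).hom) ≫ (α_ S S S).inv ≫ ((β_ S S).hom ▷ S)) ≫
            (α_ S S S).hom := by rw [h]
      _ = _ := by simp only [Category.assoc]
  have hhex : (β_ (S ⊗ S) S).hom ≫ (S ◁ m.hom) ≫ m.hom
      = (b * b) • ((m.hom ▷ S) ≫ m.hom) := by
    calc (β_ (S ⊗ S) S).hom ≫ (S ◁ m.hom) ≫ m.hom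
        = (α_ S S S).hom ≫ (S ◁ (β_ S S).hom) ≫ (α_ S S S).inv ≫ ((β_ S S).hom ▷ S) ≫
            ((α_ S S S).hom ≫ (S ◁ m.hom) ≫ m.hom) := by
          rw [hbeta]; simp only [Category.assoc]
      _ = (α_ S S S).hom ≫ (S ◁ (β_ S S).hom) ≫ (α_ S S S).inv ≫
            (((β_ S S).hom ≫ m.hom) ▷ S) ≫ m.hom := by
          rw [hL, comp_whiskerRight]; simp only [Category.assoc]
      _ = b • ((α_ S S S).hom ≫ (S ◁ (β_ S S).hom) ≫
            ((α_ S S S).inv ≫ (m.hom ▷ S) ≫ m.hom)) := by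
          rw [hB]; simp [Linear.comp_smul, Linear.smul_comp]
      _ = b • ((α_ S S S).hom ≫ (S ◁ ((β_ S S).hom ≫ m.hom)) ≫ m.hom) := by
          rw [hAinv, MonoidalCategory.whiskerLeft_comp]; simp only [Category.assoc]
      _ = (b * b) • ((α_ S S S).hom ≫ (S ◁ m.hom) ≫ m.hom) := by
          rw [hB]; simp [Linear.comp_smul, smul_smul]
      _ = (b * b) • ((m.hom ▷ S) ≫ m.hom) := by rw [hL]
  have hbb : b • (𝟙 S) = (b * b) • (𝟙 S) :=
    aux_smul_cancel_of_isIso ((m.hom ▷ S) ≫ m.hom) (hnat.symm.trans hhex)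
  have hb0 : b ≠ 0 := by
    refine aux_scalar_ne_zero (m.inv ≫ (β_ S S).hom ≫ m.hom) hb hS
  have hb1 : b = 1 := by
    have h := aux_scalar_eq hbb hS
    have h2 : b * 1 = b * b := by rw [mul_one]; exact h
    exact (mul_left_cancel₀ hb0 h2).symm
  rw [hB, hb1, one_smul]
end

section
/- Let 𝓑 be an abelian monoidal category with conjugates (condition (C)) and m : A ⊗ B → C a morphism. Then the kernel of the transposed map m̃ : A → (B ⊗ C*)* is a terminal object in the category of pairs (U, u : U → A) with m ∘ (u ⊗ id_B) = 0, and conversely any such terminal object is the kernel of m̃. In particular the left centre of an algebra in 𝓑 exists and embeds as a subobject. -/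
open CategoryTheory CategoryTheory.Limits MonoidalCategory Opposite

/-- Condition (C): a monoidal category with conjugates.  `star` is an involutive
contragredient functor (contravariant, encoded as a functor `Cᵒᵖ ⥤ C`), `δ U : U ≅ U**`
is natural and satisfies `(δ_U)* = (δ_{U*})⁻¹`, and `π U V : Hom(U, V*) ≅ Hom(U ⊗ V, 1*)`
is natural in `U` and `V`. -/
structure ConjugateData (C : Type*) [Category C] [MonoidalCategory C] where
  star : Cᵒᵖ ⥤ C
  δ : ∀ U : C, U ⟶ star.obj (op (star.obj (op U)))
  δ_isIso : ∀ U : C, IsIso (δ U)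
  δ_natural : ∀ {U V : C} (h : U ⟶ V),
    h ≫ δ V = δ U ≫ star.map (star.map h.op).op
  δ_star : ∀ U : C,
    δ (star.obj (op U)) ≫ star.map (δ U).op = 𝟙 (star.obj (op U))
  π : ∀ U V : C, (U ⟶ star.obj (op V)) ≃ (U ⊗ V ⟶ star.obj (op (𝟙_ C)))
  π_natural_left : ∀ {X U V : C} (a : X ⟶ U) (q : U ⟶ star.obj (op V)),
    π X V (a ≫ q) = (a ▷ V) ≫ π U V q
  π_natural_right : ∀ {U V Y : C} (b : Y ⟶ V) (q : U ⟶ star.obj (op V)),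
    π U Y (q ≫ star.map b.op) = (U ◁ b) ≫ π U V q

/-- The transposed morphism `m̃ : A → (B ⊗ C*)*` of `m : A ⊗ B → C`, given by
`m̃ = π⁻¹_{A, B ⊗ C*} [ π_{A ⊗ B, C*}(δ_C ∘ m) ∘ α_{A,B,C*} ]`. -/
def ConjugateData.transpose {Bc : Type*} [Category Bc] [MonoidalCategory Bc]
    (D : ConjugateData Bc) {A B C0 : Bc} (m : A ⊗ B ⟶ C0) :
    A ⟶ D.star.obj (op (B ⊗ D.star.obj (op C0))) :=
  (D.π A (B ⊗ D.star.obj (op C0))).symm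
    ((α_ A B (D.star.obj (op C0))).inv
      ≫ D.π (A ⊗ B) (D.star.obj (op C0)) (m ≫ D.δ C0))


namespace ConjugateData

open ZeroObject

variable {Bc : Type*} [Category Bc] [MonoidalCategory Bc] [Abelian Bc]
  (D : ConjugateData Bc)

lemma π_zero (U V : Bc) : D.π U V 0 = 0 := by
  have h1 : (0 : U ⟶ D.star.obj (op V)) =
      (0 : U ⟶ (0 : Bc)) ≫ (0 : (0 : Bc) ⟶ D.star.obj (op V)) := by simp
  rw [h1, D.π_natural_left]
  have h2 : (0 : (0 : Bc) ⟶ D.star.obj (op V)) = (D.π (0 : Bc) V).symm 0 :=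
    (Limits.isZero_zero Bc).eq_of_src _ _
  rw [h2, Equiv.apply_symm_apply]
  simp

lemma comp_transpose {A B C0 U : Bc} (m : A ⊗ B ⟶ C0) (u : U ⟶ A) :
    u ≫ D.transpose m = D.transpose ((u ▷ B) ≫ m) := by
  apply (D.π U (B ⊗ D.star.obj (op C0))).injective
  rw [D.π_natural_left]
  unfold transpose
  rw [Equiv.apply_symm_apply, Equiv.apply_symm_apply,
    show ((u ▷ B) ≫ m) ≫ D.δ C0 = (u ▷ B) ≫ (m ≫ D.δ C0) from Category.assoc _ _ _]
  conv_rhs => rw [D.π_natural_left]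
  rw [MonoidalCategory.associator_inv_naturality_left_assoc]

lemma transpose_injective {A B C0 : Bc} {m₁ m₂ : A ⊗ B ⟶ C0}
    (h : D.transpose m₁ = D.transpose m₂) : m₁ = m₂ := by
  unfold transpose at h
  have h2 := (D.π A (B ⊗ D.star.obj (op C0))).symm.injective h
  rw [cancel_epi (α_ A B (D.star.obj (op C0))).inv] at h2
  have h3 := (D.π (A ⊗ B) (D.star.obj (op C0))).injective h2
  haveI := D.δ_isIso C0
  rwa [cancel_mono (D.δ C0)] at h3

lemma transpose_zero {A B C0 : Bc} : D.transpose (0 : A ⊗ B ⟶ C0) = 0 := by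
  unfold transpose
  rw [zero_comp, π_zero, comp_zero]
  apply (D.π A (B ⊗ D.star.obj (op C0))).injective
  rw [Equiv.apply_symm_apply, π_zero]

lemma comp_transpose_eq_zero_iff {A B C0 U : Bc} (m : A ⊗ B ⟶ C0) (u : U ⟶ A) :
    u ≫ D.transpose m = 0 ↔ (u ▷ B) ≫ m = 0 := by
  rw [D.comp_transpose]
  constructor
  · intro h
    exact D.transpose_injective (h.trans (D.transpose_zero).symm)
  · intro h
    rw [h, D.transpose_zero]

end ConjugateData

/-- In an abelian monoidal category with conjugates: (i) for `m : A ⊗ B → C`, a pair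
`(K, k')` is terminal among pairs `(U, u : U → A)` with `m ∘ (u ⊗ id_B) = 0` iff `k'` is
the kernel of the transposed map `m̃ : A → (B ⊗ C*)*`; (ii) in particular, if the category
is braided, the left centre of any (associative) algebra exists and embeds as a
subobject. -/
theorem terminal_iff_kernel_of_transpose_and_left_centre_exists
    {Bc : Type*} [Category Bc] [MonoidalCategory Bc] [Abelian Bc]
    [BraidedCategory Bc] (D : ConjugateData Bc) :
    (∀ (A B C0 : Bc) (m : A ⊗ B ⟶ C0) (K : Bc) (k' : K ⟶ A),
      ((((k' ▷ B) ≫ m = 0)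
          ∧ ∀ (U : Bc) (u : U ⟶ A), (u ▷ B) ≫ m = 0 → ∃! f : U ⟶ K, f ≫ k' = u))
      ↔ ∃ h : k' ≫ D.transpose m = 0, Nonempty (IsLimit (KernelFork.ofι k' h)))
    ∧ (∀ (B₀ : Bc) (μ : B₀ ⊗ B₀ ⟶ B₀),
        (B₀ ◁ μ) ≫ μ = (α_ B₀ B₀ B₀).inv ≫ (μ ▷ B₀) ≫ μ →
        ∃ (Cl : Bc) (e : Cl ⟶ B₀), Mono e
          ∧ ((e ▷ B₀) ≫ μ = (β_ Cl B₀).hom ≫ (B₀ ◁ e) ≫ μ)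
          ∧ ∀ (U : Bc) (u : U ⟶ B₀),
              (u ▷ B₀) ≫ μ = (β_ U B₀).hom ≫ (B₀ ◁ u) ≫ μ →
              ∃! f : U ⟶ Cl, f ≫ e = u) := by
  constructor
  · intro A B C0 m K k'
    constructor
    · rintro ⟨hz, huniv⟩
      have hk : k' ≫ D.transpose m = 0 := (D.comp_transpose_eq_zero_iff m k').2 hz
      refine ⟨hk, ⟨KernelFork.IsLimit.ofι k' hk
        (fun {U} u hu => ((huniv U u ((D.comp_transpose_eq_zero_iff m u).1 hu)).exists).choose)
        (fun {U} u hu => ((huniv U u ((D.comp_transpose_eq_zero_iff m u).1 hu)).exists).choose_spec)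
        ?_⟩⟩
      intro U u hu f hf
      exact (huniv U u ((D.comp_transpose_eq_zero_iff m u).1 hu)).unique hf
        ((huniv U u ((D.comp_transpose_eq_zero_iff m u).1 hu)).exists).choose_spec
    · rintro ⟨hk, ⟨hl⟩⟩
      refine ⟨(D.comp_transpose_eq_zero_iff m k').1 hk, ?_⟩
      intro U u hu
      have hu' : u ≫ D.transpose m = 0 := (D.comp_transpose_eq_zero_iff m u).2 hu
      obtain ⟨l, hlu⟩ := KernelFork.IsLimit.lift' hl u hu'
      refine ⟨l, hlu, ?_⟩
      intro f hf
      apply Fork.IsLimit.hom_ext hl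
      simpa using hf.trans hlu.symm
  · intro B₀ μ _
    set m : B₀ ⊗ B₀ ⟶ B₀ := μ - (β_ B₀ B₀).hom ≫ μ with hm
    have key : ∀ (U : Bc) (u : U ⟶ B₀),
        ((u ▷ B₀) ≫ m = 0) ↔ ((u ▷ B₀) ≫ μ = (β_ U B₀).hom ≫ (B₀ ◁ u) ≫ μ) := by
      intro U u
      rw [hm, Preadditive.comp_sub, sub_eq_zero, ← Category.assoc,
        BraidedCategory.braiding_naturality_left, Category.assoc]
    refine ⟨kernel (D.transpose m), kernel.ι (D.transpose m), inferInstance, ?_, ?_⟩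
    · exact (key _ _).1 ((D.comp_transpose_eq_zero_iff m _).1 (kernel.condition _))
    · intro U u hu
      have hu' : u ≫ D.transpose m = 0 :=
        (D.comp_transpose_eq_zero_iff m u).2 ((key U u).2 hu)
      refine ⟨kernel.lift _ u hu', kernel.lift_ι _ _ _, ?_⟩
      intro f hf
      rw [← cancel_mono (kernel.ι (D.transpose m)), hf, kernel.lift_ι]
end

section
/- Let R_{1*} be the object representing X ↦ Hom_𝓒(T(X), 1*), realized as the cokernel of n : (P ⊠ P)^{⊕|N|} → P ⊠ P*. Then for every endomorphism u : P → P one has cok(n) ∘ (u ⊠ id_{P*} − id_P ⊠ u*) = 0; consequently, for any natural transformation ν of the identity functor of 𝓒, (ν ⊠ id)_{R_{1*}} = (id ⊠ ν̃)_{R_{1*}}, where ν̃_U = δ_U⁻¹ ∘ (ν_{U*})* ∘ δ_U. -/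
open CategoryTheory CategoryTheory.Limits

/-!
Since `β_P ∘ T(u ⊠ id) = β_P ∘ T(id ⊠ u*)`, every map `g : P ⊠ P → P ⊠ P*` composed with
`u ⊠ id − id ⊠ u*` lies in `N`, hence is killed by `cok(n)`, whose kernel contains the span of
a basis of `N`. As `P ⊠ P` covers `P ⊠ P*`, this forces `cok(n) ∘ (u ⊠ id − id ⊠ u*) = 0`.
Taking `u = ν_P`, naturality of `ν ⊠ id` and `id ⊠ ν̃` along the epimorphism `cok(n)` then
shows that they agree on `R_{1*}`.
-/

/-- The subspace `N = {f : P ⊠ P → P ⊠ P* | β_P ∘ T(f) = 0}`.  Here `Q` plays the role of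
`P ⊠ P`, `Q'` of `P ⊠ P*`, and `βmap : T(Q') → 1*` of the canonical pairing `β_P`. -/
def opeKer (kk : Type*) [Field kk] {C D : Type*} [Category C] [Category D]
    [Preadditive C] [Preadditive D]
    [CategoryTheory.Linear kk C] [CategoryTheory.Linear kk D]
    (T : D ⥤ C) [T.Additive] [T.Linear kk]
    (Q Q' : D) {I : C} (βmap : T.obj Q' ⟶ I) : Submodule kk (Q ⟶ Q') where
  carrier := {g | T.map g ≫ βmap = 0}
  zero_mem' := by simp
  add_mem' := by
    intro a b ha hb
    simp only [Set.mem_setOf_eq] at ha hb ⊢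
    rw [Functor.map_add, Preadditive.add_comp, ha, hb, add_zero]
  smul_mem' := by
    intro c a ha
    simp only [Set.mem_setOf_eq] at ha ⊢
    rw [Functor.map_smul, CategoryTheory.Linear.smul_comp, ha, smul_zero]

section

variable {k : Type*} [Field k] {C D : Type*} [Category C] [Category D]
  [Preadditive C] [Preadditive D] [Linear k C] [Linear k D]

theorem basis_comp_cokernel_π_eq_zero {ι : Type*} {X Y : D} [HasBiproduct fun _ : ι => X]
    [HasCokernels D] {N : Submodule k (X ⟶ Y)} (b : Module.Basis ι k N)
    {g : X ⟶ Y} (hg : g ∈ N) :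
    g ≫ cokernel.π (biproduct.desc fun i => (b i : X ⟶ Y)) = 0 := by
  set π := cokernel.π (biproduct.desc fun i => (b i : X ⟶ Y))
  have hb : ∀ i, (b i : X ⟶ Y) ≫ π = 0 := fun i => by
    rw [← biproduct.ι_desc (fun i => (b i : X ⟶ Y)) i, Category.assoc, cokernel.condition,
      Limits.comp_zero]
  have hN : (Linear.rightComp k X π).comp N.subtype = 0 := b.ext hb
  exact LinearMap.congr_fun hN ⟨g, hg⟩

theorem comp_mem_opeKer (T : D ⥤ C) [T.Additive] [T.Linear k] {Q Q' : D} {I : C}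
    (βmap : T.obj Q' ⟶ I) (g : Q ⟶ Q') {h : Q' ⟶ Q'} (hh : T.map h ≫ βmap = 0) :
    g ≫ h ∈ opeKer k T Q Q' βmap := by
  change T.map (g ≫ h) ≫ βmap = 0
  rw [T.map_comp, Category.assoc, hh, Limits.comp_zero]

end

theorem eq_zero_of_comp_eq_zero_of_epi_biproduct {D : Type*} [Category D] [Preadditive D]
    {ι : Type*} {X Y Z : D} [HasBiproduct fun _ : ι => X] (s : (⨁ fun _ : ι => X) ⟶ Y) [Epi s]
    {f : Y ⟶ Z} (hf : ∀ g : X ⟶ Y, g ≫ f = 0) : f = 0 := by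
  rw [← cancel_epi s, Limits.comp_zero]
  refine biproduct.hom_ext' _ _ fun j => ?_
  simpa using hf (biproduct.ι (fun _ => X) j ≫ s)

theorem CategoryTheory.NatTrans.app_eq_of_sub_comp_epi_eq_zero {D : Type*} [Category D] [Preadditive D]
    {ν₁ ν₂ : 𝟭 D ⟶ 𝟭 D} {Y Z : D} (π : Y ⟶ Z) [Epi π] (h : (ν₁.app Y - ν₂.app Y) ≫ π = 0) :
    ν₁.app Z = ν₂.app Z := by
  rw [Preadditive.sub_comp, sub_eq_zero] at h
  have naturality₁ := ν₁.naturality π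
  have naturality₂ := ν₂.naturality π
  dsimp only [Functor.id_obj, Functor.id_map] at naturality₁ naturality₂
  rw [← cancel_epi π, naturality₁, naturality₂, h]

/-- `PP` models `P ⊠ P`, `PPs` models `P ⊠ P*`, `l u` and `r u` model `u ⊠ id_{P*}` and
`id_P ⊠ u*`, and `βmap` models `β_P`; on `P ⊠ P*` the transformations `ν ⊠ id` and `id ⊠ ν̃`
are `ν_P ⊠ id` and `id ⊠ (ν_P)*`, since `ν̃_{U*} = (ν_U)*`. -/
theorem cokernel_kills_difference_and_trivial_twist
    {k : Type*} [Field k] {C D : Type*} [Category C] [Category D]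
    [Preadditive C] [Preadditive D]
    [CategoryTheory.Linear k C] [CategoryTheory.Linear k D]
    [Abelian D] [HasFiniteBiproducts D]
    (T : D ⥤ C) [T.Additive] [T.Linear k]
    (P : C) (PP PPs : D) (I : C) (βmap : T.obj PPs ⟶ I)
    (l r : (P ⟶ P) → (PPs ⟶ PPs))
    (hβ : ∀ u : P ⟶ P, T.map (l u) ≫ βmap = T.map (r u) ≫ βmap)
    (hproj : ∃ (m : ℕ) (s : (⨁ fun _ : Fin m => PP) ⟶ PPs), Epi s)
    (d : ℕ) (b : Module.Basis (Fin d) k (opeKer k T PP PPs βmap)) :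
    (∀ u : P ⟶ P,
      (l u - r u) ≫ cokernel.π
        (biproduct.desc (fun i => ((b i : opeKer k T PP PPs βmap) : PP ⟶ PPs))) = 0)
    ∧ (∀ (ν : 𝟭 C ⟶ 𝟭 C) (ν₁ ν₂ : 𝟭 D ⟶ 𝟭 D),
        ν₁.app PPs = l (ν.app P) → ν₂.app PPs = r (ν.app P) →
        ν₁.app (cokernel
            (biproduct.desc (fun i => ((b i : opeKer k T PP PPs βmap) : PP ⟶ PPs))))
          = ν₂.app (cokernel
            (biproduct.desc (fun i => ((b i : opeKer k T PP PPs βmap) : PP ⟶ PPs))))) := by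
  have kills_difference : ∀ u : P ⟶ P,
      (l u - r u) ≫ cokernel.π
        (biproduct.desc (fun i => ((b i : opeKer k T PP PPs βmap) : PP ⟶ PPs))) = 0 := by
    intro u
    obtain ⟨m, s, hs⟩ := hproj
    have hdiff : T.map (l u - r u) ≫ βmap = 0 := by
      rw [T.map_sub, Preadditive.sub_comp, hβ u, sub_self]
    refine eq_zero_of_comp_eq_zero_of_epi_biproduct s fun g => ?_
    rw [← Category.assoc]
    exact basis_comp_cokernel_π_eq_zero b (comp_mem_opeKer T βmap g hdiff)
  refine ⟨kills_difference, fun ν ν₁ ν₂ h₁ h₂ => ?_⟩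
  refine NatTrans.app_eq_of_sub_comp_epi_eq_zero (cokernel.π _) ?_
  rw [h₁, h₂]
  exact kills_difference (ν.app P)
end
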